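/- arXiv:2504.09339 — 6 statements merged into one kernel-verified Lean document; each statement's English description precedes it below -/
import Mathlib

section
/- Let d, k be positive integers, H ≥ 1, L ≥ 1, λ̃ ≥ 1. Let φ₁, …, φ_{k-1} ∈ ℝ^d satisfy ‖φ_i‖₂ ≤ 1, let w₁, …, w_{k-1} ∈ [0,1], let V₁, …, V_{k-1} ∈ [0, H], let b ∈ ℝ^d with ‖b‖₂ ≤ L, and let K₁ be a symmetric positive semidefinite d×d real matrix. Define Λ = 2λ̃·I_d + Σ_{i=1}^{k-1} w_i · φ_i φ_iᵀ + K₁. Then Λ is positive definite and ‖Λ⁻¹ (Σ_{i=1}^{k-1} w_i V_i φ_i + b)‖₂ ≤ H·k·L·√(2d/λ̃). -/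
open Matrix

/-- The Euclidean norm of a vector in `ℝ^d`. -/
noncomputable def euclNorm {d : ℕ} (x : Fin d → ℝ) : ℝ := Real.sqrt (∑ i, x i ^ 2)

/-!
`Λ = 2λ̃ I + P` with `P` positive semidefinite, so `⟪x, Λ x⟫ ≥ 2λ̃ ‖x‖²`; applied to `x = Λ⁻¹ y`
and combined with Cauchy–Schwarz this gives `‖Λ⁻¹ y‖ ≤ ‖y‖ / (2λ̃)`. The triangle inequality bounds
`‖y‖` by `(k - 1) H + L ≤ H k L`, and `1 / (2λ̃) ≤ √(2d/λ̃)` because `λ̃, d ≥ 1`.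
-/

lemma euclNorm_eq_norm_toLp {d : ℕ} (x : Fin d → ℝ) : euclNorm x = ‖WithLp.toLp 2 x‖ := by
  simp [euclNorm, EuclideanSpace.norm_eq, sq_abs]

lemma dotProduct_eq_inner_toLp {n : Type*} [Fintype n] (x y : n → ℝ) :
    x ⬝ᵥ y = inner ℝ (WithLp.toLp 2 x) (WithLp.toLp 2 y) := by
  simp [EuclideanSpace.inner_toLp_toLp, dotProduct_comm]

section SmulOneAddPosSemidef

variable {n : Type*} [DecidableEq n] {c : ℝ} {P : Matrix n n ℝ}

lemma posDef_smul_one_add (hc : 0 < c) (hP : P.PosSemidef) : (c • 1 + P).PosDef :=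
  (PosDef.one.smul hc).add_posSemidef hP

variable [Fintype n]

lemma mul_dotProduct_self_le_dotProduct_smul_one_add_mulVec (hP : P.PosSemidef) (x : n → ℝ) :
    c * (x ⬝ᵥ x) ≤ x ⬝ᵥ ((c • 1 + P) *ᵥ x) := by
  have hPx := hP.dotProduct_mulVec_nonneg x
  simp only [star_trivial] at hPx
  simp only [add_mulVec, smul_mulVec, one_mulVec, dotProduct_add, dotProduct_smul, smul_eq_mul]
  linarith

theorem norm_toLp_inv_smul_one_add_mulVec_le (hc : 0 < c) (hP : P.PosSemidef) (y : n → ℝ) :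
    ‖WithLp.toLp 2 ((c • 1 + P)⁻¹ *ᵥ y)‖ ≤ ‖WithLp.toLp 2 y‖ / c := by
  set x := (c • 1 + P)⁻¹ *ᵥ y
  have hy : (c • 1 + P) *ᵥ x = y := by
    rw [mulVec_mulVec, mul_nonsing_inv _ ((posDef_smul_one_add hc hP).isUnit.map detMonoidHom),
      one_mulVec]
  have key : c * ‖WithLp.toLp 2 x‖ ^ 2 ≤ ‖WithLp.toLp 2 x‖ * ‖WithLp.toLp 2 y‖ := by
    calc c * ‖WithLp.toLp 2 x‖ ^ 2 = c * (x ⬝ᵥ x) := by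
          rw [dotProduct_eq_inner_toLp, real_inner_self_eq_norm_sq]
      _ ≤ x ⬝ᵥ y := hy ▸ mul_dotProduct_self_le_dotProduct_smul_one_add_mulVec hP x
      _ ≤ ‖WithLp.toLp 2 x‖ * ‖WithLp.toLp 2 y‖ := by
          rw [dotProduct_eq_inner_toLp]; exact real_inner_le_norm _ _
  rw [le_div_iff₀ hc]
  nlinarith [norm_nonneg (WithLp.toLp 2 x), norm_nonneg (WithLp.toLp 2 y)]

end SmulOneAddPosSemidef

lemma posSemidef_sum_smul_vecMulVec_self {n ι : Type*} [Fintype n] (s : Finset ι) {w : ι → ℝ}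
    (hw : ∀ i ∈ s, 0 ≤ w i) (φ : ι → n → ℝ) :
    (∑ i ∈ s, w i • vecMulVec (φ i) (φ i)).PosSemidef :=
  posSemidef_sum s fun i hi => by
    simpa using (posSemidef_vecMulVec_self_star (φ i)).smul (hw i hi)

lemma norm_sum_smul_le {E ι : Type*} [SeminormedAddCommGroup E] [NormedSpace ℝ E]
    (s : Finset ι) {a : ι → ℝ} {v : ι → E} {C : ℝ} (ha : ∀ i ∈ s, |a i| ≤ C)
    (hv : ∀ i ∈ s, ‖v i‖ ≤ 1) : ‖∑ i ∈ s, a i • v i‖ ≤ s.card * C := by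
  calc ‖∑ i ∈ s, a i • v i‖ ≤ ∑ _i ∈ s, C := norm_sum_le_of_le s fun i hi => by
        rw [norm_smul, Real.norm_eq_abs]
        simpa using mul_le_mul (ha i hi) (hv i hi) (norm_nonneg _) ((abs_nonneg _).trans (ha i hi))
    _ = s.card * C := by rw [Finset.sum_const, nsmul_eq_mul]

lemma pred_mul_add_le_mul_mul {k : ℕ} (hk : 0 < k) {H L : ℝ} (hH : 1 ≤ H) (hL : 1 ≤ L) :
    ((k - 1 : ℕ) : ℝ) * H + L ≤ H * k * L := by
  have hk1 : (1 : ℝ) ≤ k := by exact_mod_cast hk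
  rw [Nat.cast_pred hk]
  nlinarith [mul_nonneg (by nlinarith : (0 : ℝ) ≤ k * H - 1) (sub_nonneg.2 hL)]

lemma inv_two_mul_le_sqrt_two_mul_div {d : ℕ} (hd : 0 < d) {lam : ℝ} (hlam : 1 ≤ lam) :
    (2 * lam)⁻¹ ≤ Real.sqrt (2 * d / lam) := by
  have hd1 : (1 : ℝ) ≤ d := by exact_mod_cast hd
  rw [Real.le_sqrt (by positivity) (by positivity), inv_pow,
    inv_le_comm₀ (by positivity) (by positivity), inv_div, div_le_iff₀ (by positivity)]
  nlinarith

/-- **Norm bound on the privatized weighted-ridge-regression weight vector.**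
With `Λ = 2λ̃ I + ∑_{i=1}^{k-1} w_i φ_i φ_iᵀ + K₁`, `Λ` is positive definite and
`‖Λ⁻¹ (∑ w_i V_i φ_i + b)‖₂ ≤ H k L √(2d/λ̃)`. -/
theorem stmt_3 (d k : ℕ) (hd : 0 < d) (hk : 0 < k) (H L lam : ℝ)
    (hH : 1 ≤ H) (hL : 1 ≤ L) (hlam : 1 ≤ lam)
    (φ : Fin (k - 1) → Fin d → ℝ) (hφ : ∀ i, euclNorm (φ i) ≤ 1)
    (w : Fin (k - 1) → ℝ) (hw : ∀ i, w i ∈ Set.Icc (0 : ℝ) 1)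
    (V : Fin (k - 1) → ℝ) (hV : ∀ i, V i ∈ Set.Icc (0 : ℝ) H)
    (b : Fin d → ℝ) (hb : euclNorm b ≤ L)
    (K₁ : Matrix (Fin d) (Fin d) ℝ) (hK₁ : K₁.PosSemidef)
    (Λ : Matrix (Fin d) (Fin d) ℝ)
    (hΛ : Λ = (2 * lam) • (1 : Matrix (Fin d) (Fin d) ℝ)
        + ∑ i, w i • vecMulVec (φ i) (φ i) + K₁) :
    Λ.PosDef ∧
      euclNorm (Λ⁻¹ *ᵥ (∑ i, (w i * V i) • φ i + b))
        ≤ H * k * L * Real.sqrt (2 * d / lam) := by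
  have hlam0 : 0 < 2 * lam := by linarith
  have hP : (∑ i, w i • vecMulVec (φ i) (φ i) + K₁).PosSemidef :=
    (posSemidef_sum_smul_vecMulVec_self _ (fun i _ => (hw i).1) φ).add hK₁
  rw [hΛ, add_assoc]
  refine ⟨posDef_smul_one_add hlam0 hP, ?_⟩
  have hy_norm : ‖WithLp.toLp 2 (∑ i, (w i * V i) • φ i + b)‖ ≤ ((k - 1 : ℕ) : ℝ) * H + L := by
    simp only [WithLp.toLp_add, WithLp.toLp_sum, WithLp.toLp_smul]
    refine (norm_add_le _ _).trans (add_le_add ?_ ((euclNorm_eq_norm_toLp b).symm ▸ hb))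
    simpa only [Finset.card_univ, Fintype.card_fin] using norm_sum_smul_le Finset.univ
      (fun i _ => (abs_of_nonneg (mul_nonneg (hw i).1 (hV i).1)).trans_le
        ((mul_le_of_le_one_left (hV i).1 (hw i).2).trans (hV i).2))
      (fun i _ => (euclNorm_eq_norm_toLp (φ i)).symm ▸ hφ i)
  rw [euclNorm_eq_norm_toLp]
  calc _ ≤ ‖WithLp.toLp 2 (∑ i, (w i * V i) • φ i + b)‖ / (2 * lam) :=
        norm_toLp_inv_smul_one_add_mulVec_le hlam0 hP _
    _ ≤ (((k - 1 : ℕ) : ℝ) * H + L) * (2 * lam)⁻¹ := by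
        rw [div_eq_mul_inv]; gcongr
    _ ≤ H * k * L * Real.sqrt (2 * d / lam) := by
        gcongr
        · exact pred_mul_add_le_mul_mul hk hH hL
        · exact inv_two_mul_le_sqrt_two_mul_div hd hlam
end

section
/- Let {x_k}_{k=1}^{K} be a sequence of vectors in ℝ^d and let Σ₀ be a d×d positive definite matrix. Define Σ_k = Σ₀ + Σ_{i=1}^{k} x_i x_iᵀ for k ≥ 1. Then Σ_{i=1}^{K} min{1, x_iᵀ Σ_{i-1}⁻¹ x_i} ≤ 2·log(det(Σ_K)/det(Σ₀)). Moreover, if ‖x_i‖₂ ≤ L for all i ∈ {1,…,K}, then Σ_{i=1}^{K} min{1, x_iᵀ Σ_{i-1}⁻¹ x_i} ≤ 2·( d·log((trace(Σ₀) + K·L²)/d) − log det(Σ₀) ). -/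
/-!
By the matrix determinant lemma, `det Σ_k = det Σ_{k-1} · (1 + x_kᵀ Σ_{k-1}⁻¹ x_k)`, so
`log det Σ_K - log det Σ₀` telescopes into `∑ log (1 + x_iᵀ Σ_{i-1}⁻¹ x_i)`, and each summand
dominates `min {1, x_iᵀ Σ_{i-1}⁻¹ x_i} / 2`. For the second bound, AM-GM on the eigenvalues gives
`det Σ_K ≤ (trace Σ_K / d)^d`, and each update raises the trace by `‖x_i‖² ≤ L²`.
-/

open Matrix

open Finset

lemma min_one_le_two_mul_log_one_add {u : ℝ} (hu : 0 ≤ u) :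
    min 1 u ≤ 2 * Real.log (1 + u) := by
  have h1u : 0 < 1 + u := by linarith
  rcases le_total u 1 with h | h
  · have hlog : u / (1 + u) ≤ Real.log (1 + u) := by
      have := Real.one_sub_inv_le_log_of_pos h1u
      rwa [show 1 - (1 + u)⁻¹ = u / (1 + u) by field_simp; ring] at this
    have h2 : u ≤ 2 * (u / (1 + u)) := by
      rw [mul_div_assoc', le_div_iff₀ h1u]; nlinarith
    rw [min_eq_right h]; linarith
  · have hm : Real.log 2 ≤ Real.log (1 + u) := Real.log_le_log (by norm_num) (by linarith)
    have h2 := Real.log_two_gt_d9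
    rw [min_eq_left h]; linarith

namespace Matrix

variable {n : Type*} [Fintype n]

theorem det_add_vecMulVec [DecidableEq n] {R : Type*} [CommRing R] {A : Matrix n n R}
    (hA : IsUnit A.det) (u v : n → R) :
    (A + vecMulVec u v).det = A.det * (1 + v ⬝ᵥ (A⁻¹ *ᵥ u)) := by
  rw [vecMulVec_eq Unit, det_add_replicateCol_mul_replicateRow hA]
  simp only [det_unique, PUnit.default_eq_unit, add_apply, one_apply_eq, mul_apply,
    replicateRow_apply, replicateCol_apply, sum_mul, mul_assoc, dotProduct, mulVec, mul_sum]
  rw [sum_comm]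

theorem PosDef.add_vecMulVec_self {A : Matrix n n ℝ} (hA : A.PosDef) (x : n → ℝ) :
    (A + vecMulVec x x).PosDef := by
  simpa using hA.add_posSemidef (posSemidef_vecMulVec_self_star x)

theorem PosDef.log_det_le_of_trace_le [DecidableEq n] {A : Matrix n n ℝ} (hA : A.PosDef)
    {t : ℝ} (ht : A.trace ≤ t) :
    Real.log A.det ≤ Fintype.card n * Real.log (t / Fintype.card n) := by
  rcases isEmpty_or_nonempty n with hn | hn
  · simp
  set ev := hA.isHermitian.eigenvalues
  have hev : ∀ i, 0 < ev i := hA.eigenvalues_pos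
  have hcard : (0 : ℝ) < Fintype.card n := by exact_mod_cast Fintype.card_pos
  have htr : A.trace = ∑ i, ev i := by simp [hA.isHermitian.trace_eq_sum_eigenvalues, ev]
  have htr_pos : 0 < A.trace := htr ▸ Finset.sum_pos (fun i _ => hev i) univ_nonempty
  set m := A.trace / Fintype.card n
  have hm : 0 < m := by positivity
  have hlog : ∀ i, Real.log (ev i) ≤ Real.log m + (ev i / m - 1) := fun i => by
    have := Real.log_le_sub_one_of_pos (div_pos (hev i) hm)
    rw [Real.log_div (hev i).ne' hm.ne'] at this
    linarith
  calc Real.log A.det = ∑ i, Real.log (ev i) := by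
        rw [hA.isHermitian.det_eq_prod_eigenvalues]
        simpa using Real.log_prod (fun i _ => (hev i).ne')
    _ ≤ ∑ i, (Real.log m + (ev i / m - 1)) := Finset.sum_le_sum fun i _ => hlog i
    _ = Fintype.card n * Real.log m := by
        simp only [sum_add_distrib, sum_sub_distrib, ← sum_div, ← htr, sum_const, card_univ,
          nsmul_eq_mul, m]
        field_simp
        ring
    _ ≤ Fintype.card n * Real.log (t / Fintype.card n) :=
        mul_le_mul_of_nonneg_left (Real.log_le_log hm (div_le_div_of_nonneg_right ht hcard.le))
          hcard.le

end Matrix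

section RankOneUpdates

open Matrix

variable {n : Type*} [Fintype n] {S : ℕ → Matrix n n ℝ} {x : ℕ → n → ℝ}

theorem posDef_of_rankOne_updates [DecidableEq n] (hS0 : (S 0).PosDef)
    (hS : ∀ k, S (k + 1) = S k + vecMulVec (x (k + 1)) (x (k + 1))) (k : ℕ) : (S k).PosDef := by
  induction k with
  | zero => exact hS0
  | succ k ih => exact hS k ▸ ih.add_vecMulVec_self _

theorem log_det_eq_add_sum_log_one_add [DecidableEq n] (hS0 : (S 0).PosDef)
    (hS : ∀ k, S (k + 1) = S k + vecMulVec (x (k + 1)) (x (k + 1))) (K : ℕ) :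
    Real.log (S K).det = Real.log (S 0).det +
      ∑ i ∈ Icc 1 K, Real.log (1 + x i ⬝ᵥ ((S (i - 1))⁻¹ *ᵥ x i)) := by
  induction K with
  | zero => simp
  | succ K ih =>
    have hPD := posDef_of_rankOne_updates hS0 hS K
    have hu : 0 ≤ x (K + 1) ⬝ᵥ ((S K)⁻¹ *ᵥ x (K + 1)) := by
      simpa using hPD.inv.posSemidef.dotProduct_mulVec_nonneg (x (K + 1))
    rw [hS K, det_add_vecMulVec (isUnit_iff_ne_zero.mpr hPD.det_pos.ne'),
      Real.log_mul hPD.det_pos.ne' (by positivity), ih, sum_Icc_succ_top (by omega),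
      Nat.add_sub_cancel]
    ring

theorem sum_min_one_le_two_mul_log_det_div [DecidableEq n] (hS0 : (S 0).PosDef)
    (hS : ∀ k, S (k + 1) = S k + vecMulVec (x (k + 1)) (x (k + 1))) (K : ℕ) :
    ∑ i ∈ Icc 1 K, min 1 (x i ⬝ᵥ ((S (i - 1))⁻¹ *ᵥ x i))
      ≤ 2 * Real.log ((S K).det / (S 0).det) := by
  have hPD := posDef_of_rankOne_updates hS0 hS
  calc ∑ i ∈ Icc 1 K, min 1 (x i ⬝ᵥ ((S (i - 1))⁻¹ *ᵥ x i))
      ≤ ∑ i ∈ Icc 1 K, 2 * Real.log (1 + x i ⬝ᵥ ((S (i - 1))⁻¹ *ᵥ x i)) :=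
        sum_le_sum fun i _ => min_one_le_two_mul_log_one_add <| by
          simpa using (hPD (i - 1)).inv.posSemidef.dotProduct_mulVec_nonneg (x i)
    _ = 2 * Real.log ((S K).det / (S 0).det) := by
        rw [← mul_sum, Real.log_div (hPD K).det_pos.ne' hS0.det_pos.ne',
          log_det_eq_add_sum_log_one_add hS0 hS K]
        ring

theorem trace_eq_add_sum_dotProduct_self
    (hS : ∀ k, S (k + 1) = S k + vecMulVec (x (k + 1)) (x (k + 1))) (K : ℕ) :
    (S K).trace = (S 0).trace + ∑ i ∈ Icc 1 K, x i ⬝ᵥ x i := by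
  induction K with
  | zero => simp
  | succ K ih => rw [hS K, trace_add, trace_vecMulVec, ih, sum_Icc_succ_top (by omega), add_assoc]

end RankOneUpdates

lemma euclNorm_sq {d : ℕ} (y : Fin d → ℝ) : euclNorm y ^ 2 = y ⬝ᵥ y := by
  rw [euclNorm, Real.sq_sqrt (by positivity)]
  simp [dotProduct, sq]

theorem stmt_4_general (d K : ℕ) (L : ℝ)
    (x : ℕ → Fin d → ℝ)
    (S0 : Matrix (Fin d) (Fin d) ℝ) (hS0 : S0.PosDef)
    (Sig : ℕ → Matrix (Fin d) (Fin d) ℝ)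
    (hSig0 : Sig 0 = S0)
    (hSig : ∀ k, 1 ≤ k → Sig k = S0 + ∑ i ∈ Finset.Icc 1 k, vecMulVec (x i) (x i)) :
    (∑ i ∈ Finset.Icc 1 K, min 1 (x i ⬝ᵥ ((Sig (i - 1))⁻¹ *ᵥ x i))
        ≤ 2 * Real.log ((Sig K).det / S0.det)) ∧
    ((∀ i ∈ Finset.Icc 1 K, euclNorm (x i) ≤ L) →
      ∑ i ∈ Finset.Icc 1 K, min 1 (x i ⬝ᵥ ((Sig (i - 1))⁻¹ *ᵥ x i))
        ≤ 2 * (d * Real.log ((S0.trace + K * L ^ 2) / d) - Real.log S0.det)) := by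
  have hSig_all : ∀ k, Sig k = S0 + ∑ i ∈ Finset.Icc 1 k, vecMulVec (x i) (x i) := by
    rintro (_ | k)
    · simp [hSig0]
    · exact hSig _ (by omega)
  have hstep : ∀ k, Sig (k + 1) = Sig k + vecMulVec (x (k + 1)) (x (k + 1)) := fun k => by
    rw [hSig_all, hSig_all, Finset.sum_Icc_succ_top (by omega), add_assoc]
  have hPD0 : (Sig 0).PosDef := hSig0 ▸ hS0
  have hPDK := posDef_of_rankOne_updates hPD0 hstep K
  have hpot := sum_min_one_le_two_mul_log_det_div hPD0 hstep K
  rw [hSig0] at hpot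
  refine ⟨hpot, fun hL => hpot.trans ?_⟩
  have htrace : (Sig K).trace ≤ S0.trace + K * L ^ 2 := by
    rw [trace_eq_add_sum_dotProduct_self hstep, hSig0]
    have := Finset.sum_le_sum fun i hi => (euclNorm_sq (x i)).symm.trans_le
      (pow_le_pow_left₀ (Real.sqrt_nonneg _) (hL i hi) 2)
    simpa using this
  have hlogdet : Real.log (Sig K).det ≤ d * Real.log ((S0.trace + K * L ^ 2) / d) := by
    simpa using hPDK.log_det_le_of_trace_le htrace
  rw [Real.log_div hPDK.det_pos.ne' hS0.det_pos.ne']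
  linarith

/-- **Elliptical potential lemma.** With `Σ_k = Σ₀ + ∑_{i=1}^k x_i x_iᵀ` for a positive
definite `Σ₀`, one has `∑_{i=1}^K min{1, x_iᵀ Σ_{i-1}⁻¹ x_i} ≤ 2 log(det Σ_K / det Σ₀)`;
moreover, if `‖x_i‖₂ ≤ L` for all `i ∈ {1,…,K}`, then the sum is at most
`2 (d log((trace Σ₀ + K L²)/d) − log det Σ₀)`. -/
theorem stmt_4 (d K : ℕ) (hd : 0 < d) (hK : 0 < K) (L : ℝ)
    (x : ℕ → Fin d → ℝ)
    (S0 : Matrix (Fin d) (Fin d) ℝ) (hS0 : S0.PosDef)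
    (Sig : ℕ → Matrix (Fin d) (Fin d) ℝ)
    (hSig0 : Sig 0 = S0)
    (hSig : ∀ k, 1 ≤ k → Sig k = S0 + ∑ i ∈ Finset.Icc 1 k, vecMulVec (x i) (x i)) :
    (∑ i ∈ Finset.Icc 1 K, min 1 (x i ⬝ᵥ ((Sig (i - 1))⁻¹ *ᵥ x i))
        ≤ 2 * Real.log ((Sig K).det / S0.det)) ∧
    ((∀ i ∈ Finset.Icc 1 K, euclNorm (x i) ≤ L) →
      ∑ i ∈ Finset.Icc 1 K, min 1 (x i ⬝ᵥ ((Sig (i - 1))⁻¹ *ᵥ x i))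
        ≤ 2 * (d * Real.log ((S0.trace + K * L ^ 2) / d) - Real.log S0.det)) :=
  stmt_4_general d K L x S0 hS0 Sig hSig0 hSig
end

section
/- Let A and B be d×d positive definite real matrices with B ⪯ A (i.e., A − B is positive semidefinite). Then for every x ∈ ℝ^d: xᵀ A x ≤ (xᵀ B x) · det(A)/det(B). -/
/-!
With `S = √B`, the matrix `C = S⁻¹ A S⁻¹` satisfies `1 ≤ C` and `det C = det A / det B`.
All eigenvalues of `C` are at least `1`, so each of them is at most their product `det C`;
hence `C ≤ det C • 1`, and conjugating back by `S` gives `A ≤ (det A / det B) • B`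
in the Loewner order.
-/

open Matrix

lemma Finset.single_le_prod_of_one_le {ι R : Type*} [CommSemiring R] [PartialOrder R]
    [IsOrderedRing R] {s : Finset ι} {f : ι → R} (hf : ∀ j ∈ s, 1 ≤ f j) {i : ι} (hi : i ∈ s) :
    f i ≤ ∏ j ∈ s, f j := by
  classical
  rw [← Finset.mul_prod_erase s f hi]
  exact le_mul_of_one_le_right (zero_le_one.trans (hf i hi))
    (Finset.one_le_prod fun j hj ↦ hf j (Finset.mem_of_mem_erase hj))

namespace Matrix

open scoped MatrixOrder

variable {n : Type*} [Fintype n] [DecidableEq n]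

lemma le_det_smul_one_of_one_le {C : Matrix n n ℝ} (hC : 1 ≤ C) : C ≤ C.det • 1 := by
  have hC' : C.IsHermitian := IsSelfAdjoint.of_nonneg (zero_le_one.trans hC)
  have one_le_eigenvalues (i : n) : 1 ≤ hC'.eigenvalues i :=
    (CFC.one_le_iff C).mp hC _ (hC'.eigenvalues_mem_spectrum_real i)
  rw [← Algebra.algebraMap_eq_smul_one]
  refine le_algebraMap_of_spectrum_le fun x hx ↦ ?_
  obtain ⟨i, rfl⟩ := hC'.spectrum_real_eq_range_eigenvalues ▸ hx
  simpa [hC'.det_eq_prod_eigenvalues] using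
    Finset.single_le_prod_of_one_le (fun j _ ↦ one_le_eigenvalues j) (Finset.mem_univ i)

lemma le_det_div_det_smul_of_le {A B : Matrix n n ℝ} (hB : B.PosDef) (hBA : B ≤ A) :
    A ≤ (A.det / B.det) • B := by
  set S := CFC.sqrt B
  have hSS : S * S = B := CFC.sqrt_mul_sqrt_self B hB.posSemidef.nonneg
  have hS : IsSelfAdjoint S := IsSelfAdjoint.of_nonneg (CFC.sqrt_nonneg B)
  have hdetS : S.det * S.det = B.det := by rw [← det_mul, hSS]
  have hSunit : IsUnit S.det := by
    refine isUnit_iff_ne_zero.mpr fun h ↦ hB.det_pos.ne ?_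
    rw [← hdetS, h, zero_mul]
  have hSinv : IsSelfAdjoint S⁻¹ := IsHermitian.inv hS
  set C := S⁻¹ * A * S⁻¹
  have hSCS : S * C * S = A := by
    simp only [C, ← mul_assoc, mul_nonsing_inv S hSunit, one_mul]
    rw [mul_assoc, nonsing_inv_mul S hSunit, mul_one]
  have hdetC : C.det = A.det / B.det := by
    rw [det_mul, det_mul, det_nonsing_inv, Ring.inverse_eq_inv, ← hdetS]
    field_simp [hSunit.ne_zero]
  have hC : 1 ≤ C :=
    calc (1 : Matrix n n ℝ) = S⁻¹ * B * S⁻¹ := by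
          rw [← hSS, ← mul_assoc, nonsing_inv_mul S hSunit, one_mul, mul_nonsing_inv S hSunit]
      _ ≤ C := hSinv.conjugate_le_conjugate hBA
  calc A = S * C * S := hSCS.symm
    _ ≤ S * (C.det • 1) * S := hS.conjugate_le_conjugate (le_det_smul_one_of_one_le hC)
    _ = (A.det / B.det) • B := by rw [mul_smul_comm, smul_mul_assoc, mul_one, hSS, hdetC]

end Matrix

theorem stmt_5_general (d : ℕ) (A B : Matrix (Fin d) (Fin d) ℝ)
    (hB : B.PosDef) (hBA : (A - B).PosSemidef) (x : Fin d → ℝ) :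
    x ⬝ᵥ (A *ᵥ x) ≤ (x ⬝ᵥ (B *ᵥ x)) * (A.det / B.det) := by
  have h := (le_iff.mp (le_det_div_det_smul_of_le hB hBA)).dotProduct_mulVec_nonneg x
  simp only [star_trivial, sub_mulVec, smul_mulVec, dotProduct_sub, dotProduct_smul,
    smul_eq_mul] at h
  linarith

/-- If `A` and `B` are positive definite with `B ⪯ A`, then for every `x`,
`xᵀ A x ≤ (xᵀ B x) · det A / det B`. -/
theorem stmt_5 (d : ℕ) (A B : Matrix (Fin d) (Fin d) ℝ)
    (hA : A.PosDef) (hB : B.PosDef) (hBA : (A - B).PosSemidef) (x : Fin d → ℝ) :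
    x ⬝ᵥ (A *ᵥ x) ≤ (x ⬝ᵥ (B *ᵥ x)) * (A.det / B.det) :=
  stmt_5_general d A B hB hBA x
end

section
/- Let d, K be positive integers, λ̃, α, γ, A > 0. Let {σ_k}_{k=1}^K be non-negative reals and {a_k}_{k=1}^K ⊂ ℝ^d with ‖a_k‖₂ ≤ A. Define recursively Σ̂₁ = 2λ̃·I_d, and for k ≥ 1: σ̄_k = max{ σ_k, α, γ·‖a_k‖_{Σ̂_k⁻¹}^{1/2} } and Σ̂_{k+1} = Σ̂_k + a_k a_kᵀ / σ̄_k². Let ι = log(1 + K A² / (d λ̃ α²)). Then Σ_{k=1}^K min{1, ‖a_k‖_{Σ̂_k⁻¹}} ≤ 2dι + 2γ² dι + 2√(dι) · √( Σ_{k=1}^K (σ_k² + α²) ). -/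
/-!
Write `x_k = ‖a_k‖²_{Σ̂_k⁻¹} / σ̄_k²`. Each summand splits Bernstein-style as
`min{1, ‖a_k‖} ≤ (1 + γ²) min{1, x_k} + √(σ_k² + α²) √(min{1, x_k})`: if `σ̄_k` is attained by
`σ_k` or `α` the second term pays, and if it is attained by `γ ‖a_k‖^{1/2}` then `γ² x_k = ‖a_k‖`.
Cauchy–Schwarz reduces everything to `∑ min{1, x_k}`, which is the elliptical potential of the
rescaled vectors `a_k / σ̄_k`: by the matrix determinant lemma and `min{1, x} ≤ 2 log(1 + x)` it is
at most `2 log (det Σ̂_{K+1} / det Σ̂_1)`, and concavity of `log` on the eigenvalues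
(`log det M ≤ d log (tr M / d)`) together with `tr Σ̂_{K+1} ≤ 2λ̃d + K A²/α²` bounds this by `2dι`.
-/

open Matrix

open Finset Real

lemma Finset.sum_Icc_one_eq_sum_range {M : Type*} [AddCommMonoid M] (f : ℕ → M) (K : ℕ) :
    ∑ k ∈ Icc 1 K, f k = ∑ k ∈ range K, f (k + 1) := by
  rw [range_eq_Ico, sum_Ico_add' f 0 K 1, zero_add, Ico_add_one_right_eq_Icc]

lemma dotProduct_self_le_sq_of_euclNorm_le {d : ℕ} {x : Fin d → ℝ} {A : ℝ} (h : euclNorm x ≤ A) :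
    x ⬝ᵥ x ≤ A ^ 2 := by
  have hx : x ⬝ᵥ x = euclNorm x ^ 2 := by
    rw [euclNorm, sq_sqrt (by positivity)]
    simp only [dotProduct, sq]
  rw [hx]
  exact pow_le_pow_left₀ (sqrt_nonneg _) h 2

lemma inv_sq_mul_dotProduct_self_le {d : ℕ} {x : Fin d → ℝ} {τ α A : ℝ} (hα : 0 < α) (hτ : α ≤ τ)
    (h : euclNorm x ≤ A) : (τ ^ 2)⁻¹ * (x ⬝ᵥ x) ≤ A ^ 2 / α ^ 2 := by
  rw [← div_eq_inv_mul]
  exact div_le_div₀ (sq_nonneg A) (dotProduct_self_le_sq_of_euclNorm_le h) (by positivity)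
    (pow_le_pow_left₀ hα.le hτ 2)

lemma max_le_sqrt_sq_add_sq (a b : ℝ) : max a b ≤ √(a ^ 2 + b ^ 2) :=
  max_le (le_sqrt_of_sq_le (by nlinarith)) (le_sqrt_of_sq_le (by nlinarith))

lemma min_one_le_two_mul_log_one_add_s8 {x : ℝ} (hx : 0 ≤ x) : min 1 x ≤ 2 * log (1 + x) := by
  have hfrac : min 1 x ≤ 2 * (2 * x / (x + 2)) := by
    rw [mul_div_assoc', le_div_iff₀ (by positivity)]
    rcases le_total 1 x with h | h
    · rw [min_eq_left h]; linarith
    · rw [min_eq_right h]; nlinarith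
  linarith [le_log_one_add_of_nonneg hx]

lemma min_one_sqrt_le_of_le_max {q τ B γ : ℝ} (hq : 0 ≤ q) (hτ : 0 < τ) (hB : 0 ≤ B)
    (h : τ ≤ max B (γ * √(√q))) :
    min 1 (√q) ≤ (1 + γ ^ 2) * min 1 ((τ ^ 2)⁻¹ * q) + B * √(min 1 ((τ ^ 2)⁻¹ * q)) := by
  obtain ⟨s, hs, rfl⟩ : ∃ s, 0 ≤ s ∧ q = s ^ 2 := ⟨√q, sqrt_nonneg q, (sq_sqrt hq).symm⟩
  rw [sqrt_sq hs] at h ⊢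
  rcases le_or_gt τ s with hle | hlt
  · have hm : min 1 ((τ ^ 2)⁻¹ * s ^ 2) = 1 := by
      refine min_eq_left ?_
      rw [← div_eq_inv_mul, one_le_div (by positivity)]
      exact pow_le_pow_left₀ hτ.le hle 2
    rw [hm, sqrt_one]
    nlinarith [min_le_left 1 s, sq_nonneg γ]
  · set t := s / τ with ht
    have ht0 : 0 ≤ t := by positivity
    have hst : s = τ * t := by rw [ht]; field_simp
    have hm : min 1 ((τ ^ 2)⁻¹ * s ^ 2) = t ^ 2 := by
      rw [ht, div_pow, div_eq_inv_mul, min_eq_right]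
      rw [← div_eq_inv_mul, div_le_one (by positivity)]
      exact pow_le_pow_left₀ hs hlt.le 2
    rw [hm, sqrt_sq ht0]
    rcases le_max_iff.mp h with hτB | hτγ
    · calc min 1 s ≤ τ * t := (min_le_right 1 s).trans_eq hst
        _ ≤ B * t := mul_le_mul_of_nonneg_right hτB ht0
        _ ≤ _ := le_add_of_nonneg_left (by positivity)
    · have hs' : s ≤ γ * √s * t := hst.trans_le (mul_le_mul_of_nonneg_right hτγ ht0)
      have hsq : s * s ≤ s * (γ ^ 2 * t ^ 2) :=
        calc s * s ≤ (γ * √s * t) * (γ * √s * t) := mul_self_le_mul_self hs hs'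
          _ = s * (γ ^ 2 * t ^ 2) := by linear_combination (γ ^ 2 * t ^ 2) * sq_sqrt hs
      have hγt : s ≤ γ ^ 2 * t ^ 2 := by
        rcases hs.eq_or_lt with hs0 | hs0
        · rw [← hs0]; positivity
        · exact le_of_mul_le_mul_left hsq hs0
      calc min 1 s ≤ γ ^ 2 * t ^ 2 := (min_le_right 1 s).trans hγt
        _ ≤ _ := by nlinarith [sq_nonneg t, mul_nonneg hB ht0]

lemma sum_min_one_sqrt_le {ι : Type*} (t : Finset ι) {q τ V : ι → ℝ} {γ : ℝ}
    (hq : ∀ k ∈ t, 0 ≤ q k) (hτ : ∀ k ∈ t, 0 < τ k) (hV : ∀ k ∈ t, 0 ≤ V k)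
    (h : ∀ k ∈ t, τ k ≤ max (√(V k)) (γ * √(√(q k)))) :
    ∑ k ∈ t, min 1 (√(q k))
      ≤ (1 + γ ^ 2) * ∑ k ∈ t, min 1 ((τ k ^ 2)⁻¹ * q k)
        + √(∑ k ∈ t, V k) * √(∑ k ∈ t, min 1 ((τ k ^ 2)⁻¹ * q k)) := by
  calc ∑ k ∈ t, min 1 (√(q k))
      ≤ ∑ k ∈ t, ((1 + γ ^ 2) * min 1 ((τ k ^ 2)⁻¹ * q k)
          + √(V k) * √(min 1 ((τ k ^ 2)⁻¹ * q k))) :=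
        sum_le_sum fun k hk =>
          min_one_sqrt_le_of_le_max (hq k hk) (hτ k hk) (sqrt_nonneg _) (h k hk)
    _ ≤ _ := by
      rw [sum_add_distrib, ← mul_sum]
      gcongr
      refine (sum_mul_le_sqrt_mul_sqrt t _ _).trans_eq ?_
      congr 2 <;> refine sum_congr rfl fun k hk => sq_sqrt ?_
      · exact hV k hk
      · exact le_min zero_le_one (mul_nonneg (by positivity) (hq k hk))

lemma one_add_sq_mul_add_sqrt_mul_sqrt_le {P D S γ : ℝ} (hP : P ≤ 2 * D) :
    (1 + γ ^ 2) * P + √S * √P ≤ 2 * D + 2 * γ ^ 2 * D + 2 * √D * √S := by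
  have hsqrt : √P ≤ 2 * √D := calc
    √P ≤ √(2 * D) := sqrt_le_sqrt hP
    _ = √2 * √D := sqrt_mul zero_le_two D
    _ ≤ 2 * √D := by
      gcongr
      rw [sqrt_le_left zero_le_two]
      norm_num
  calc (1 + γ ^ 2) * P + √S * √P ≤ (1 + γ ^ 2) * (2 * D) + √S * (2 * √D) := by gcongr
    _ = _ := by ring

namespace Matrix

variable {n : Type*} [Fintype n]

lemma PosDef.inv_dotProduct_mulVec_self_nonneg [DecidableEq n] {M : Matrix n n ℝ} (hM : M.PosDef)
    (x : n → ℝ) : 0 ≤ x ⬝ᵥ M⁻¹ *ᵥ x := by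
  simpa using hM.inv.posSemidef.dotProduct_mulVec_nonneg x

lemma det_add_smul_vecMulVec_self [DecidableEq n] {A : Matrix n n ℝ} (hA : IsUnit A.det) (c : ℝ)
    (v : n → ℝ) : (A + c • vecMulVec v v).det = A.det * (1 + c * (v ⬝ᵥ A⁻¹ *ᵥ v)) := by
  rw [← smul_vecMulVec, vecMulVec_eq Unit, det_add_replicateCol_mul_replicateRow hA,
    Matrix.mul_assoc, ← replicateCol_mulVec, det_unique (n := Unit)]
  simp [replicateRow_mul_replicateCol_apply, mulVec_smul]

lemma PosDef.log_det_le_card_mul_log_of_trace_le [DecidableEq n] {M : Matrix n n ℝ}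
    (hM : M.PosDef) {t : ℝ} (ht : 0 < t) (htr : M.trace ≤ Fintype.card n * t) : log M.det ≤ Fintype.card n * log t := by
  set μ := hM.isHermitian.eigenvalues
  have hμ : ∀ i, 0 < μ i := hM.eigenvalues_pos
  have hdet : M.det = ∏ i, μ i := by simpa using hM.isHermitian.det_eq_prod_eigenvalues
  have htrace : M.trace = ∑ i, μ i := by simpa using hM.isHermitian.trace_eq_sum_eigenvalues
  have hlog : ∀ i, log (μ i) ≤ log t + (μ i / t - 1) := fun i => by
    have := log_le_sub_one_of_pos (div_pos (hμ i) ht)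
    rw [log_div (hμ i).ne' ht.ne'] at this
    linarith
  calc log M.det = ∑ i, log (μ i) := by rw [hdet, log_prod fun i _ => (hμ i).ne']
    _ ≤ ∑ i, (log t + (μ i / t - 1)) := sum_le_sum fun i _ => hlog i
    _ = Fintype.card n * log t + (M.trace / t - Fintype.card n) := by
      rw [sum_add_distrib, sum_sub_distrib, ← sum_div, htrace]; simp
    _ ≤ Fintype.card n * log t := by
      have : M.trace / t ≤ Fintype.card n := by rwa [div_le_iff₀ ht]
      linarith

lemma PosDef.log_det_sub_log_det_smul_one_le [DecidableEq n] [Nonempty n] {M : Matrix n n ℝ}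
    (hM : M.PosDef) {μ L : ℝ} (hμ : 0 < μ) (hL : 0 ≤ L) (htr : M.trace ≤ Fintype.card n * μ + L) :
    log M.det - log (μ • (1 : Matrix n n ℝ)).det
      ≤ Fintype.card n * log (1 + L / (Fintype.card n * μ)) := by
  have hn : (0 : ℝ) < Fintype.card n := by exact_mod_cast Fintype.card_pos
  have hfac : 0 < 1 + L / (Fintype.card n * μ) := by positivity
  have hcard : (Fintype.card n : ℝ) * (μ * (1 + L / (Fintype.card n * μ)))
      = Fintype.card n * μ + L := by field_simp
  have hdet := hM.log_det_le_card_mul_log_of_trace_le (mul_pos hμ hfac) (hcard ▸ htr)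
  rw [log_mul hμ.ne' hfac.ne'] at hdet
  rw [det_smul, det_one, mul_one, log_pow]
  linarith

section RankOneUpdates

variable {M : ℕ → Matrix n n ℝ} {c : ℕ → ℝ} {v : ℕ → n → ℝ}

lemma posDef_of_add_smul_vecMulVec (h0 : (M 0).PosDef) (hc : ∀ k, 0 ≤ c k)
    (hM : ∀ k, M (k + 1) = M k + c k • vecMulVec (v k) (v k)) (k : ℕ) : (M k).PosDef := by
  induction k with
  | zero => exact h0
  | succ k ih =>
    rw [hM k]
    exact ih.add_posSemidef ((posSemidef_vecMulVec_self_star (v k)).smul (hc k))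

lemma trace_eq_add_sum_of_add_smul_vecMulVec
    (hM : ∀ k, M (k + 1) = M k + c k • vecMulVec (v k) (v k)) (K : ℕ) :
    (M K).trace = (M 0).trace + ∑ k ∈ range K, c k * (v k ⬝ᵥ v k) := by
  induction K with
  | zero => simp
  | succ K ih =>
    rw [hM K, trace_add, trace_smul, trace_vecMulVec, ih, sum_range_succ, smul_eq_mul, add_assoc]

lemma sum_log_one_add_eq_log_det_sub [DecidableEq n] (h0 : (M 0).PosDef) (hc : ∀ k, 0 ≤ c k)
    (hM : ∀ k, M (k + 1) = M k + c k • vecMulVec (v k) (v k)) (K : ℕ) :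
    ∑ k ∈ range K, log (1 + c k * (v k ⬝ᵥ (M k)⁻¹ *ᵥ v k)) = log (M K).det - log (M 0).det := by
  have hpd := posDef_of_add_smul_vecMulVec h0 hc hM
  induction K with
  | zero => simp
  | succ K ih =>
    have hquad := (hpd K).inv_dotProduct_mulVec_self_nonneg (v K)
    have hfac : 0 < 1 + c K * (v K ⬝ᵥ (M K)⁻¹ *ᵥ v K) :=
      add_pos_of_pos_of_nonneg one_pos (mul_nonneg (hc K) hquad)
    rw [sum_range_succ, ih, hM K, det_add_smul_vecMulVec_self (hpd K).det_pos.ne'.isUnit,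
      log_mul (hpd K).det_pos.ne' hfac.ne']
    ring

theorem sum_min_one_le_two_mul_log_det_sub [DecidableEq n] (h0 : (M 0).PosDef) (hc : ∀ k, 0 ≤ c k)
    (hM : ∀ k, M (k + 1) = M k + c k • vecMulVec (v k) (v k)) (K : ℕ) :
    ∑ k ∈ range K, min 1 (c k * (v k ⬝ᵥ (M k)⁻¹ *ᵥ v k))
      ≤ 2 * (log (M K).det - log (M 0).det) := by
  have hpd := posDef_of_add_smul_vecMulVec h0 hc hM
  rw [← sum_log_one_add_eq_log_det_sub h0 hc hM, mul_sum]
  refine sum_le_sum fun k _ => min_one_le_two_mul_log_one_add_s8 ?_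
  exact mul_nonneg (hc k) ((hpd k).inv_dotProduct_mulVec_self_nonneg (v k))

theorem sum_min_one_le_two_mul_card_mul_log [DecidableEq n] [Nonempty n] {μ L : ℝ} (hμ : 0 < μ)
    (h0 : M 0 = μ • 1) (hc : ∀ k, 0 ≤ c k) (hL : ∀ k, c k * (v k ⬝ᵥ v k) ≤ L)
    (hM : ∀ k, M (k + 1) = M k + c k • vecMulVec (v k) (v k)) (K : ℕ) :
    ∑ k ∈ range K, min 1 (c k * (v k ⬝ᵥ (M k)⁻¹ *ᵥ v k))
      ≤ 2 * Fintype.card n * log (1 + K * L / (Fintype.card n * μ)) := by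
  have hpd0 : (M 0).PosDef := h0 ▸ PosDef.one.smul hμ
  have hL0 : 0 ≤ L :=
    (mul_nonneg (hc 0) (by simpa using dotProduct_self_star_nonneg (v 0))).trans (hL 0)
  have htr : (M K).trace ≤ Fintype.card n * μ + K * L := by
    rw [trace_eq_add_sum_of_add_smul_vecMulVec hM, h0, trace_smul, trace_one, smul_eq_mul,
      mul_comm μ]
    gcongr
    simpa using sum_le_sum fun k (_ : k ∈ range K) => hL k
  calc _ ≤ 2 * (log (M K).det - log (M 0).det) := sum_min_one_le_two_mul_log_det_sub hpd0 hc hM K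
    _ ≤ 2 * (Fintype.card n * log (1 + K * L / (Fintype.card n * μ))) := by
      rw [h0]
      gcongr
      exact (posDef_of_add_smul_vecMulVec hpd0 hc hM K).log_det_sub_log_det_smul_one_le hμ
        (by positivity) htr
    _ = _ := by ring

end RankOneUpdates

end Matrix

theorem stmt_8_general (d K : ℕ) (hd : 0 < d) (lam α γ A : ℝ)
    (hlam : 0 < lam) (hα : 0 < α)
    (σ : ℕ → ℝ)
    (a : ℕ → Fin d → ℝ) (ha : ∀ k, euclNorm (a k) ≤ A)
    (Sh : ℕ → Matrix (Fin d) (Fin d) ℝ) (σb : ℕ → ℝ)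
    (hSh1 : Sh 1 = (2 * lam) • (1 : Matrix (Fin d) (Fin d) ℝ))
    (hσb : ∀ k, 1 ≤ k →
      σb k = max (σ k) (max α (γ * Real.sqrt (Real.sqrt (a k ⬝ᵥ ((Sh k)⁻¹ *ᵥ a k))))))
    (hSh : ∀ k, 1 ≤ k → Sh (k + 1) = Sh k + ((σb k) ^ 2)⁻¹ • vecMulVec (a k) (a k))
    (ι : ℝ) (hι : ι = Real.log (1 + K * A ^ 2 / (d * lam * α ^ 2))) :
    ∑ k ∈ Finset.Icc 1 K, min 1 (Real.sqrt (a k ⬝ᵥ ((Sh k)⁻¹ *ᵥ a k)))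
      ≤ 2 * d * ι + 2 * γ ^ 2 * d * ι
        + 2 * Real.sqrt (d * ι) * Real.sqrt (∑ k ∈ Finset.Icc 1 K, ((σ k) ^ 2 + α ^ 2)) := by
  have : Nonempty (Fin d) := Fin.pos_iff_nonempty.mp hd
  have hασb : ∀ k, 1 ≤ k → α ≤ σb k := fun k hk =>
    (hσb k hk).symm ▸ le_max_of_le_right (le_max_left _ _)
  have hupd : ∀ k, Sh (k + 1 + 1) = Sh (k + 1)
      + (σb (k + 1) ^ 2)⁻¹ • vecMulVec (a (k + 1)) (a (k + 1)) := fun k => hSh (k + 1) (by omega)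
  have hc : ∀ k, 0 ≤ (σb (k + 1) ^ 2)⁻¹ := fun k => by positivity
  have hpd : ∀ k, 1 ≤ k → (Sh k).PosDef := fun k hk => by
    simpa [Nat.sub_add_cancel hk] using posDef_of_add_smul_vecMulVec (M := fun k => Sh (k + 1))
      (hSh1 ▸ PosDef.one.smul (by positivity)) hc hupd (k - 1)
  set P := ∑ k ∈ Icc 1 K, min 1 ((σb k ^ 2)⁻¹ * (a k ⬝ᵥ (Sh k)⁻¹ *ᵥ a k))
  have hP : P ≤ 2 * (d * ι) := by
    have hpot := sum_min_one_le_two_mul_card_mul_log (M := fun k => Sh (k + 1)) (by positivity)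
      hSh1 hc (fun k => inv_sq_mul_dotProduct_self_le hα (hασb _ (by omega)) (ha _)) hupd K
    refine ((sum_Icc_one_eq_sum_range _ _).trans_le hpot).trans ?_
    have hhalf : K * (A ^ 2 / α ^ 2) / (d * (2 * lam)) = K * A ^ 2 / (d * lam * α ^ 2) / 2 := by
      field_simp
    rw [Fintype.card_fin, hhalf, hι, ← mul_assoc 2 (d : ℝ)]
    gcongr 2 * d * log (1 + ?_)
    exact half_le_self (by positivity)
  calc _ ≤ (1 + γ ^ 2) * P + √(∑ k ∈ Icc 1 K, (σ k ^ 2 + α ^ 2)) * √P := by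
        refine sum_min_one_sqrt_le _ (fun k hk => ?_) (fun k hk => ?_) (fun k _ => by positivity)
          (fun k hk => ?_) <;> rw [mem_Icc] at hk
        · exact (hpd k hk.1).inv_dotProduct_mulVec_self_nonneg _
        · exact hα.trans_le (hασb k hk.1)
        · rw [hσb k hk.1, ← max_assoc]
          exact max_le_max (max_le_sqrt_sq_add_sq _ _) le_rfl
    _ ≤ _ := by simpa only [mul_assoc] using one_add_sq_mul_add_sqrt_mul_sqrt_le hP

/-- **Variance-weighted elliptical potential bound.** With
`Σ̂₁ = 2λ̃ I`, `σ̄_k = max{σ_k, α, γ ‖a_k‖_{Σ̂_k⁻¹}^{1/2}}`, and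
`Σ̂_{k+1} = Σ̂_k + a_k a_kᵀ / σ̄_k²`, setting `ι = log(1 + K A²/(d λ̃ α²))`,
`∑_{k=1}^K min{1, ‖a_k‖_{Σ̂_k⁻¹}} ≤ 2dι + 2γ² dι + 2√(dι) √(∑_{k=1}^K (σ_k² + α²))`. -/
theorem stmt_8 (d K : ℕ) (hd : 0 < d) (hK : 0 < K) (lam α γ A : ℝ)
    (hlam : 0 < lam) (hα : 0 < α) (hγ : 0 < γ) (hA : 0 < A)
    (σ : ℕ → ℝ) (hσ : ∀ k, 0 ≤ σ k)
    (a : ℕ → Fin d → ℝ) (ha : ∀ k, euclNorm (a k) ≤ A)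
    (Sh : ℕ → Matrix (Fin d) (Fin d) ℝ) (σb : ℕ → ℝ)
    (hSh1 : Sh 1 = (2 * lam) • (1 : Matrix (Fin d) (Fin d) ℝ))
    (hσb : ∀ k, 1 ≤ k →
      σb k = max (σ k) (max α (γ * Real.sqrt (Real.sqrt (a k ⬝ᵥ ((Sh k)⁻¹ *ᵥ a k))))))
    (hSh : ∀ k, 1 ≤ k → Sh (k + 1) = Sh k + ((σb k) ^ 2)⁻¹ • vecMulVec (a k) (a k))
    (ι : ℝ) (hι : ι = Real.log (1 + K * A ^ 2 / (d * lam * α ^ 2))) :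
    ∑ k ∈ Finset.Icc 1 K, min 1 (Real.sqrt (a k ⬝ᵥ ((Sh k)⁻¹ *ᵥ a k)))
      ≤ 2 * d * ι + 2 * γ ^ 2 * d * ι
        + 2 * Real.sqrt (d * ι) * Real.sqrt (∑ k ∈ Finset.Icc 1 K, ((σ k) ^ 2 + α ^ 2)) :=
  stmt_8_general d K hd lam α γ A hlam hα σ a ha Sh σb hSh1 hσb hSh ι hι
end

section
/- Let S be a set, A a nonempty finite set, d, l positive integers, H ≥ 1, β > 0, λ̃ > 0, L₁ > 0, ε > 0. Let φ : S × A → ℝ^d satisfy ‖φ(s,a)‖₂ ≤ 1 for all (s,a), and let r : S × A → [0,1] be a fixed function. Let 𝒱 be the class of all functions V : S → ℝ of the form V(s) = max_{a ∈ A} min_{1 ≤ i ≤ l} min( H, r(s,a) + w_iᵀ φ(s,a) + β·√(φ(s,a)ᵀ Λ_i⁻¹ φ(s,a)) ) with ‖w_i‖₂ ≤ L₁ and Λ_i ⪰ λ̃·I_d positive definite, and assume additionally that every V ∈ 𝒱 takes values in [0, H]. Consider the squared class 𝒱² = { V² : V ∈ 𝒱 }. Then the ε-covering number N_ε of 𝒱²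 with respect to the sup distance dist(f₁, f₂) = sup_{s ∈ S} |f₁(s) − f₂(s)| satisfies log N_ε ≤ d·l·log(1 + 8H·L₁/ε) + d²·l·log(1 + 32√d·H²·β² / (λ̃·ε²)). -/
open Matrix

/-!
Parametrize `𝒱` by the pairs `(wᵢ, Λᵢ⁻¹)`, where `‖wᵢ‖ ≤ L₁` and `‖Λᵢ⁻¹‖_F ≤ √d / λ̃` because
`Λᵢ ⪰ λ̃ I`. Since `‖φ‖ ≤ 1`, the maps `min H`, `min_i`, `max_a` are 1-Lipschitz and
`|√u - √v| ≤ √|u - v|`, the value moves by at most `‖Δw‖ + β √‖ΔΛ⁻¹‖_F` when the parameters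
move, and squaring values in `[0, H]` costs a factor `2H`. A maximal `δ`-separated subset of a
ball of radius `R` in an `n`-dimensional space is a `δ`-cover, and comparing volumes of disjoint
balls of radius `δ / 2` bounds its size by `(1 + 2R/δ)ⁿ`; covering the `wᵢ` at scale `ε / (4H)`
in `ℝ^d` and the `Λᵢ⁻¹` at scale `(ε / (4Hβ))²` in `ℝ^{d×d}` gives the bound.
-/

open Module MeasureTheory Metric WithLp
open scoped NNReal ENNReal

section Covering

variable {E : Type*} [NormedAddCommGroup E] [NormedSpace ℝ E] [FiniteDimensional ℝ E]

lemma Finset.card_le_of_isSeparated_of_subset_closedBall {δ : ℝ≥0} (hδ : 0 < δ) {R : ℝ}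
    (hR : 0 ≤ R) {T : Finset E} (hTR : (T : Set E) ⊆ closedBall 0 R)
    (hT : IsSeparated δ (T : Set E)) :
    (T.card : ℝ) ≤ (1 + 2 * R / δ) ^ finrank ℝ E := by
  borelize E
  set μ : Measure E := Measure.addHaar
  set n := finrank ℝ E
  have hball : ∀ (x : E) {r : ℝ}, 0 < r → μ.real (ball x r) = r ^ n * μ.real (ball 0 1) := by
    intro x r hr
    rw [measureReal_def, Measure.addHaar_ball_of_pos μ x hr, ENNReal.toReal_mul,
      ENNReal.toReal_ofReal (by positivity), measureReal_def]
  have hdisj : (T : Set E).PairwiseDisjoint fun y => ball y (δ / 2) := by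
    intro x hx y hy hxy
    refine ball_disjoint_ball ?_
    have hsep : (δ : ℝ≥0∞) < edist x y := hT hx hy hxy
    rw [edist_nndist, ENNReal.coe_lt_coe] at hsep
    have : (δ : ℝ) < dist x y := hsep
    linarith
  have hsub : ⋃ y ∈ T, ball y (δ / 2) ⊆ ball (0 : E) (R + δ / 2) := by
    simp only [Set.iUnion_subset_iff]
    intro y hy z hz
    have := mem_closedBall.mp (hTR hy)
    rw [mem_ball] at hz ⊢
    linarith [dist_triangle z y 0]
  have hvol := measureReal_mono (μ := μ) hsub measure_ball_lt_top.ne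
  rw [measureReal_biUnion_finset hdisj (fun _ _ => measurableSet_ball)] at hvol
  have hδ2 : (0 : ℝ) < δ / 2 := by positivity
  simp only [hball _ hδ2, hball _ (by positivity : 0 < R + δ / 2), Finset.sum_const,
    nsmul_eq_mul] at hvol
  have hc : 0 < μ.real (ball 0 1) :=
    ENNReal.toReal_pos (measure_ball_pos μ _ one_pos).ne' measure_ball_lt_top.ne
  have : (1 + 2 * R / δ) = (R + δ / 2) / (δ / 2) := by field_simp; ring
  rw [this, div_pow, le_div_iff₀ (by positivity)]
  nlinarith

lemma Metric.packingNumber_closedBall_le {δ : ℝ≥0} (hδ : 0 < δ) {R : ℝ} (hR : 0 ≤ R) :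
    packingNumber δ (closedBall (0 : E) R) ≤ ⌊(1 + 2 * R / δ) ^ finrank ℝ E⌋₊ := by
  refine iSup₂_le fun C hC => iSup_le fun hsep => ?_
  by_contra! hlt
  obtain ⟨t, htC, ht⟩ := Set.exists_subset_encard_eq (Order.add_one_le_of_lt hlt)
  have htfin : t.Finite := Set.finite_of_encard_eq_coe ht
  have hcard := (htfin.toFinset).card_le_of_isSeparated_of_subset_closedBall hδ hR
    (by simpa using htC.trans hC) (by simpa using hsep.subset htC)
  rw [htfin.encard_eq_coe_toFinset_card] at ht
  have : htfin.toFinset.card = ⌊(1 + 2 * R / δ) ^ finrank ℝ E⌋₊ + 1 := by exact_mod_cast ht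
  rw [this, Nat.cast_add_one] at hcard
  exact (Nat.lt_floor_add_one _).not_ge hcard

lemma exists_finset_cover_closedBall {δ : ℝ} (hδ : 0 < δ) {R : ℝ} (hR : 0 ≤ R) :
    ∃ T : Finset E, (∀ x : E, ‖x‖ ≤ R → ∃ y ∈ T, ‖x - y‖ ≤ δ) ∧
      (T.card : ℝ) ≤ (1 + 2 * R / δ) ^ finrank ℝ E := by
  lift δ to ℝ≥0 using hδ.le
  have hpack := packingNumber_closedBall_le (E := E) (by exact_mod_cast hδ) hR
  have hfin : packingNumber δ (closedBall (0 : E) R) ≠ ⊤ := ne_top_of_le_ne_top (by simp) hpack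
  have hcard := encard_maximalSeparatedSet hfin
  have hT : (maximalSeparatedSet δ (closedBall (0 : E) R)).Finite :=
    Set.finite_of_encard_le_coe (hcard.trans_le hpack)
  refine ⟨hT.toFinset, fun x hx => ?_, ?_⟩
  · obtain ⟨y, hy, hxy⟩ := isCover_maximalSeparatedSet hfin (mem_closedBall_zero_iff.mpr hx)
    refine ⟨y, hT.mem_toFinset.mpr hy, ?_⟩
    rw [← dist_eq_norm]
    exact edist_le_coe.mp hxy
  · rw [hT.encard_eq_coe_toFinset_card] at hcard
    have : hT.toFinset.card ≤ ⌊(1 + 2 * R / δ) ^ finrank ℝ E⌋₊ := by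
      exact_mod_cast hcard.trans_le hpack
    exact (Nat.cast_le.mpr this).trans (Nat.floor_le (by positivity))

end Covering

lemma abs_dotProduct_le_norm_mul_norm {n : Type*} [Fintype n] (x y : n → ℝ) :
    |x ⬝ᵥ y| ≤ ‖toLp 2 x‖ * ‖toLp 2 y‖ := by
  simpa [EuclideanSpace.inner_toLp_toLp, dotProduct_comm] using
    abs_real_inner_le_norm (toLp 2 x) (toLp 2 y)

lemma euclNorm_eq_norm {d : ℕ} (x : Fin d → ℝ) : euclNorm x = ‖toLp 2 x‖ := by
  simp [euclNorm, EuclideanSpace.norm_eq]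

lemma exists_finset_euclidean_cover (n : Type*) [Fintype n] {δ : ℝ} (hδ : 0 < δ) {R : ℝ}
    (hR : 0 ≤ R) :
    ∃ T : Finset (n → ℝ), (∀ x, ‖toLp 2 x‖ ≤ R → ∃ y ∈ T, ‖toLp 2 (x - y)‖ ≤ δ) ∧
      (T.card : ℝ) ≤ (1 + 2 * R / δ) ^ Fintype.card n := by
  classical
  obtain ⟨T, hT, hcard⟩ := exists_finset_cover_closedBall (E := EuclideanSpace ℝ n) hδ hR
  refine ⟨T.image ofLp, fun x hx => ?_, ?_⟩
  · obtain ⟨y, hy, hxy⟩ := hT (toLp 2 x) hx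
    exact ⟨y.ofLp, Finset.mem_image_of_mem _ hy, by simpa using hxy⟩
  · rw [finrank_euclideanSpace] at hcard
    exact (Nat.cast_le.mpr Finset.card_image_le).trans hcard

lemma Real.abs_sqrt_sub_sqrt_le (u v : ℝ) : |√u - √v| ≤ √|u - v| := by
  wlog h : v ≤ u generalizing u v
  · rw [abs_sub_comm, abs_sub_comm u]
    exact this v u (le_of_not_ge h)
  rw [abs_of_nonneg (sub_nonneg.mpr (Real.sqrt_le_sqrt h)), abs_of_nonneg (sub_nonneg.mpr h),
    sub_le_iff_le_add]
  rcases le_total v 0 with hv | hv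
  · rw [Real.sqrt_eq_zero_of_nonpos hv, add_zero]
    exact Real.sqrt_le_sqrt (by linarith)
  · refine Real.sqrt_le_iff.mpr ⟨by positivity, ?_⟩
    nlinarith [Real.sq_sqrt hv, Real.sq_sqrt (sub_nonneg.mpr h),
      mul_nonneg (Real.sqrt_nonneg (u - v)) (Real.sqrt_nonneg v)]

lemma abs_sq_sub_sq_le_of_mem_Icc {H a b : ℝ} (ha : a ∈ Set.Icc 0 H) (hb : b ∈ Set.Icc 0 H) :
    |a ^ 2 - b ^ 2| ≤ 2 * H * |a - b| := by
  rw [sq_sub_sq, abs_mul, abs_of_nonneg (by linarith [ha.1, hb.1])]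
  gcongr
  linarith [ha.2, hb.2]

lemma Finset.abs_sup'_sub_sup'_le {α : Type*} {s : Finset α} (hs : s.Nonempty) {f g : α → ℝ}
    {c : ℝ} (h : ∀ a ∈ s, |f a - g a| ≤ c) : |s.sup' hs f - s.sup' hs g| ≤ c := by
  have key : ∀ f g : α → ℝ, (∀ a ∈ s, |f a - g a| ≤ c) → s.sup' hs f ≤ s.sup' hs g + c :=
    fun f g h => Finset.sup'_le _ _ fun a ha => by
      linarith [(abs_le.mp (h a ha)).2, Finset.le_sup' g ha]
  rw [abs_sub_le_iff, sub_le_iff_le_add, sub_le_iff_le_add, add_comm c, add_comm c]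
  exact ⟨key f g h, key g f fun a ha => abs_sub_comm (f a) (g a) ▸ h a ha⟩

lemma Finset.abs_inf'_sub_inf'_le {α : Type*} {s : Finset α} (hs : s.Nonempty) {f g : α → ℝ}
    {c : ℝ} (h : ∀ a ∈ s, |f a - g a| ≤ c) : |s.inf' hs f - s.inf' hs g| ≤ c := by
  have key : ∀ f g : α → ℝ, (∀ a ∈ s, |f a - g a| ≤ c) → s.inf' hs f ≤ s.inf' hs g + c :=
    fun f g h => by
      rw [← sub_le_iff_le_add]
      exact Finset.le_inf' _ _ fun a ha => by
        linarith [(abs_le.mp (h a ha)).2, Finset.inf'_le f ha]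
  rw [abs_sub_le_iff, sub_le_iff_le_add, sub_le_iff_le_add, add_comm c, add_comm c]
  exact ⟨key f g h, key g f fun a ha => abs_sub_comm (f a) (g a) ▸ h a ha⟩

lemma Real.log_natCast_le_add_of_le_mul {N : ℕ} {x y : ℝ} (h : (N : ℝ) ≤ x * y) (hx : 1 ≤ x)
    (hy : 1 ≤ y) : Real.log N ≤ Real.log x + Real.log y := by
  rw [← Real.log_mul (by positivity) (by positivity)]
  rcases N.eq_zero_or_pos with rfl | hN
  · simpa using Real.log_nonneg (one_le_mul_of_one_le_of_one_le hx hy)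
  · exact Real.log_le_log (by exact_mod_cast hN) h

section Frobenius

open scoped Matrix.Norms.Frobenius

variable {m n : Type*} [Fintype m] [Fintype n]

lemma Matrix.norm_toLp_mulVec_le (M : Matrix m n ℝ) (x : n → ℝ) :
    ‖toLp 2 (M *ᵥ x)‖ ≤ ‖M‖ * ‖toLp 2 x‖ := by
  rw [← frobenius_norm_replicateCol (ι := Unit), ← frobenius_norm_replicateCol (ι := Unit) x,
    replicateCol_mulVec]
  exact frobenius_norm_mul M _

lemma Matrix.abs_dotProduct_mulVec_le (M : Matrix n n ℝ) (x : n → ℝ) :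
    |x ⬝ᵥ (M *ᵥ x)| ≤ ‖M‖ * ‖toLp 2 x‖ ^ 2 :=
  calc |x ⬝ᵥ (M *ᵥ x)| ≤ ‖toLp 2 x‖ * ‖toLp 2 (M *ᵥ x)‖ := abs_dotProduct_le_norm_mul_norm _ _
    _ ≤ ‖toLp 2 x‖ * (‖M‖ * ‖toLp 2 x‖) := by gcongr; exact M.norm_toLp_mulVec_le x
    _ = ‖M‖ * ‖toLp 2 x‖ ^ 2 := by ring

lemma Matrix.frobenius_norm_sq_eq_sum_col (M : Matrix m n ℝ) :
    ‖M‖ ^ 2 = ∑ j, ‖toLp 2 (M.col j)‖ ^ 2 := by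
  rw [← frobenius_norm_transpose]
  change ‖toLp 2 fun j => toLp 2 (Mᵀ j)‖ ^ 2 = _
  rw [PiLp.norm_sq_eq_of_L2]
  rfl

variable (n) in
lemma Matrix.exists_finset_frobenius_cover {δ : ℝ} (hδ : 0 < δ) {R : ℝ} (hR : 0 ≤ R) :
    ∃ T : Finset (Matrix n n ℝ), (∀ M : Matrix n n ℝ, ‖M‖ ≤ R → ∃ N ∈ T, ‖M - N‖ ≤ δ) ∧
      (T.card : ℝ) ≤ (1 + 2 * R / δ) ^ (Fintype.card n * Fintype.card n) := by
  simpa [finrank_matrix] using exists_finset_cover_closedBall (E := Matrix n n ℝ) hδ hR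

section PosDef

variable [DecidableEq n] {Λ : Matrix n n ℝ} {lam : ℝ}

lemma Matrix.PosDef.mul_norm_toLp_inv_mulVec_le (hΛ : Λ.PosDef)
    (hΛlam : (Λ - lam • (1 : Matrix n n ℝ)).PosSemidef) (x : n → ℝ) :
    lam * ‖toLp 2 (Λ⁻¹ *ᵥ x)‖ ≤ ‖toLp 2 x‖ := by
  set z := Λ⁻¹ *ᵥ x
  have hz : Λ *ᵥ z = x := by
    rw [mulVec_mulVec, mul_nonsing_inv _ ((isUnit_iff_isUnit_det Λ).mp hΛ.isUnit), one_mulVec]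
  have hquad : lam * ‖toLp 2 z‖ ^ 2 ≤ ‖toLp 2 z‖ * ‖toLp 2 x‖ := by
    have h := hΛlam.dotProduct_mulVec_nonneg z
    simp only [star_trivial, sub_mulVec, smul_mulVec, one_mulVec, dotProduct_sub,
      dotProduct_smul, smul_eq_mul, hz] at h
    have hzz : z ⬝ᵥ z = ‖toLp 2 z‖ ^ 2 := by
      rw [EuclideanSpace.norm_sq_eq]; simp [dotProduct, sq]
    rw [hzz] at h
    linarith [le_abs_self (z ⬝ᵥ x), abs_dotProduct_le_norm_mul_norm z x]
  rcases (norm_nonneg (toLp 2 z)).eq_or_lt with h0 | hpos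
  · rw [← h0, mul_zero]; positivity
  · exact le_of_mul_le_mul_right (by linarith) hpos

lemma Matrix.PosDef.frobenius_norm_inv_le (hΛ : Λ.PosDef) (hlam : 0 < lam)
    (hΛlam : (Λ - lam • (1 : Matrix n n ℝ)).PosSemidef) :
    ‖Λ⁻¹‖ ≤ √(Fintype.card n) / lam := by
  have hcol : ∀ j, ‖toLp 2 (Λ⁻¹.col j)‖ ≤ 1 / lam := by
    intro j
    rw [le_div_iff₀' hlam, ← mulVec_single_one]
    simpa using hΛ.mul_norm_toLp_inv_mulVec_le hΛlam (Pi.single j 1)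
  rw [← pow_le_pow_iff_left₀ (norm_nonneg _) (by positivity) two_ne_zero,
    frobenius_norm_sq_eq_sum_col, div_pow, Real.sq_sqrt (Nat.cast_nonneg _)]
  calc ∑ j, ‖toLp 2 (Λ⁻¹.col j)‖ ^ 2 ≤ ∑ _j : n, (1 / lam) ^ 2 := by
        gcongr with j; exact hcol j
    _ = Fintype.card n / lam ^ 2 := by simp [div_eq_mul_inv]

end PosDef

section OptimisticValue

variable {S A ι : Type*} [Fintype A] [Nonempty A] [Fintype ι] [Nonempty ι]

/-- `M i` stands for `(Λ i)⁻¹`: the class is parametrized, and covered, through these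
inverses. -/
noncomputable def optimisticValue (H β : ℝ) (φ : S → A → n → ℝ) (r : S → A → ℝ)
    (w : ι → n → ℝ) (M : ι → Matrix n n ℝ) (s : S) : ℝ :=
  Finset.univ.sup' Finset.univ_nonempty fun a => Finset.univ.inf' Finset.univ_nonempty fun i =>
    min H (r s a + w i ⬝ᵥ φ s a + β * √(φ s a ⬝ᵥ (M i *ᵥ φ s a)))

variable {H β : ℝ} {φ : S → A → n → ℝ} {r : S → A → ℝ}

lemma optimisticValue_le (w : ι → n → ℝ) (M : ι → Matrix n n ℝ) (s : S) :
    optimisticValue H β φ r w M s ≤ H :=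
  Finset.sup'_le _ _ fun _ _ =>
    (Finset.inf'_le _ (Finset.mem_univ (Classical.arbitrary ι))).trans (min_le_left _ _)

lemma abs_optimisticValue_sub_le (hβ : 0 ≤ β) (hφ : ∀ s a, ‖toLp 2 (φ s a)‖ ≤ 1)
    {w w' : ι → n → ℝ} {M M' : ι → Matrix n n ℝ} {δw δM : ℝ}
    (hw : ∀ i, ‖toLp 2 (w i - w' i)‖ ≤ δw) (hM : ∀ i, ‖M i - M' i‖ ≤ δM) (s : S) :
    |optimisticValue H β φ r w M s - optimisticValue H β φ r w' M' s| ≤ δw + β * √δM := by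
  refine Finset.abs_sup'_sub_sup'_le _ fun a _ => Finset.abs_inf'_sub_inf'_le _ fun i _ => ?_
  set x := φ s a
  have hlin : |(w i - w' i) ⬝ᵥ x| ≤ δw := calc
    |(w i - w' i) ⬝ᵥ x| ≤ ‖toLp 2 (w i - w' i)‖ * ‖toLp 2 x‖ :=
      abs_dotProduct_le_norm_mul_norm _ _
    _ ≤ δw * 1 := by gcongr; exacts [(norm_nonneg _).trans (hw i), hw i, hφ s a]
    _ = δw := mul_one δw
  have hquad : |√(x ⬝ᵥ (M i *ᵥ x)) - √(x ⬝ᵥ (M' i *ᵥ x))| ≤ √δM := calc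
    _ ≤ √|x ⬝ᵥ ((M i - M' i) *ᵥ x)| := by
      rw [sub_mulVec, dotProduct_sub]; exact Real.abs_sqrt_sub_sqrt_le _ _
    _ ≤ √(‖M i - M' i‖ * ‖toLp 2 x‖ ^ 2) :=
      Real.sqrt_le_sqrt ((M i - M' i).abs_dotProduct_mulVec_le x)
    _ ≤ √(δM * 1 ^ 2) := by
      gcongr; exacts [(norm_nonneg _).trans (hM i), hM i, hφ s a]
    _ = √δM := by rw [one_pow, mul_one]
  calc |min H (r s a + w i ⬝ᵥ x + β * √(x ⬝ᵥ (M i *ᵥ x)))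
        - min H (r s a + w' i ⬝ᵥ x + β * √(x ⬝ᵥ (M' i *ᵥ x)))|
      ≤ |(w i - w' i) ⬝ᵥ x + β * (√(x ⬝ᵥ (M i *ᵥ x)) - √(x ⬝ᵥ (M' i *ᵥ x)))| := by
        refine (abs_min_sub_min_le_max _ _ _ _).trans_eq ?_
        rw [sub_self, abs_zero, max_eq_right (abs_nonneg _), sub_dotProduct]
        congr 1
        ring
    _ ≤ δw + β * √δM := by
        refine (abs_add_le _ _).trans (add_le_add hlin ?_)
        rw [abs_mul, abs_of_nonneg hβ]
        exact mul_le_mul_of_nonneg_left hquad hβ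

variable (ι H β φ r) in
open Classical in
noncomputable def sqOptimisticCover (Tw : Finset (n → ℝ)) (TM : Finset (Matrix n n ℝ)) :
    Finset (S → ℝ) :=
  (Fintype.piFinset (fun _ : ι => Tw) ×ˢ Fintype.piFinset fun _ : ι => TM).image
    fun p s => max 0 (optimisticValue H β φ r p.1 p.2 s) ^ 2

lemma card_sqOptimisticCover_le {Tw : Finset (n → ℝ)} {TM : Finset (Matrix n n ℝ)} {x y : ℝ}
    (hTw : (Tw.card : ℝ) ≤ x) (hTM : (TM.card : ℝ) ≤ y) :
    ((sqOptimisticCover ι H β φ r Tw TM).card : ℝ) ≤ x ^ Fintype.card ι * y ^ Fintype.card ι := by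
  classical
  have hcard : (sqOptimisticCover ι H β φ r Tw TM).card ≤
      Tw.card ^ Fintype.card ι * TM.card ^ Fintype.card ι :=
    Finset.card_image_le.trans_eq (by simp [Finset.card_product, Fintype.card_piFinset])
  calc _ ≤ ((Tw.card ^ Fintype.card ι * TM.card ^ Fintype.card ι : ℕ) : ℝ) := by
        exact_mod_cast hcard
    _ ≤ x ^ Fintype.card ι * y ^ Fintype.card ι := by
        push_cast
        exact mul_le_mul (pow_le_pow_left₀ (Nat.cast_nonneg _) hTw _)
          (pow_le_pow_left₀ (Nat.cast_nonneg _) hTM _) (by positivity)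
          (pow_nonneg ((Nat.cast_nonneg _).trans hTw) _)

lemma exists_mem_sqOptimisticCover (hβ : 0 ≤ β) (hφ : ∀ s a, ‖toLp 2 (φ s a)‖ ≤ 1)
    {Tw : Finset (n → ℝ)} {TM : Finset (Matrix n n ℝ)} {w : ι → n → ℝ} {M : ι → Matrix n n ℝ}
    {δw δM : ℝ} (hTw : ∀ i, ∃ y ∈ Tw, ‖toLp 2 (w i - y)‖ ≤ δw)
    (hTM : ∀ i, ∃ N ∈ TM, ‖M i - N‖ ≤ δM) (hV : ∀ s, 0 ≤ optimisticValue H β φ r w M s) :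
    ∃ g ∈ sqOptimisticCover ι H β φ r Tw TM,
      ∀ s, |optimisticValue H β φ r w M s ^ 2 - g s| ≤ 2 * H * (δw + β * √δM) := by
  classical
  choose w' hw'T hw' using hTw
  choose M' hM'T hM' using hTM
  refine ⟨fun s => max 0 (optimisticValue H β φ r w' M' s) ^ 2, Finset.mem_image.mpr ⟨(w', M'),
    Finset.mem_product.mpr ⟨Fintype.mem_piFinset.mpr hw'T, Fintype.mem_piFinset.mpr hM'T⟩, rfl⟩,
    fun s => ?_⟩
  have hH : 0 ≤ H := (hV s).trans (optimisticValue_le w M s)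
  set V := optimisticValue H β φ r w M s
  set V' := optimisticValue H β φ r w' M' s
  -- clipping `V'` at `0` keeps it in `[0, H]` and only brings it closer to `V ≥ 0`
  calc |V ^ 2 - max 0 V' ^ 2| ≤ 2 * H * |V - max 0 V'| :=
        abs_sq_sub_sq_le_of_mem_Icc ⟨hV s, optimisticValue_le _ _ _⟩
          ⟨le_max_left _ _, max_le hH (optimisticValue_le _ _ _)⟩
    _ ≤ 2 * H * |V - V'| := by
        refine mul_le_mul_of_nonneg_left ?_ (by positivity)
        simpa only [max_eq_left (show 0 ≤ V from hV s), max_comm V'] using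
          abs_max_sub_max_le_abs V V' 0
    _ ≤ 2 * H * (δw + β * √δM) :=
        mul_le_mul_of_nonneg_left (abs_optimisticValue_sub_le hβ hφ hw' hM' s) (by positivity)

end OptimisticValue

end Frobenius

theorem stmt_12_general {S A : Type*} [Fintype A] [Nonempty A]
    (d l : ℕ) (hl : 0 < l)
    (H β lam L₁ ε : ℝ) (hH : 1 ≤ H) (hβ : 0 < β) (hlam : 0 < lam) (hL₁ : 0 < L₁)
    (hε : 0 < ε)
    (φ : S → A → Fin d → ℝ) (hφ : ∀ s a, euclNorm (φ s a) ≤ 1)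
    (r : S → A → ℝ)
    (𝒱 : Set (S → ℝ))
    (h𝒱 : 𝒱 = {V | ∃ (w : Fin l → Fin d → ℝ) (Λ : Fin l → Matrix (Fin d) (Fin d) ℝ),
      (∀ i, euclNorm (w i) ≤ L₁) ∧
      (∀ i, (Λ i).PosDef ∧ (Λ i - lam • (1 : Matrix (Fin d) (Fin d) ℝ)).PosSemidef) ∧
      ∀ s, V s = Finset.univ.sup' (Finset.univ_nonempty (α := A)) (fun a : A =>
        Finset.univ.inf' ⟨⟨0, hl⟩, Finset.mem_univ _⟩ (fun i : Fin l =>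
          min H (r s a + w i ⬝ᵥ φ s a
            + β * Real.sqrt (φ s a ⬝ᵥ ((Λ i)⁻¹ *ᵥ φ s a)))))})
    (hbd : ∀ V ∈ 𝒱, ∀ s, V s ∈ Set.Icc (0 : ℝ) H) :
    ∃ C : Finset (S → ℝ),
      (∀ V ∈ 𝒱, ∃ g ∈ C, ∀ s, |(V s) ^ 2 - g s| ≤ ε) ∧
      Real.log C.card ≤ d * l * Real.log (1 + 8 * H * L₁ / ε)
        + d ^ 2 * l * Real.log (1 + 32 * Real.sqrt d * H ^ 2 * β ^ 2 / (lam * ε ^ 2)) := by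
  have : Nonempty (Fin l) := ⟨⟨0, hl⟩⟩
  have hH₀ : 0 < H := by linarith
  -- radii `δw = ε / (4H)` and `δM = (ε / (4Hβ))²` make `2H (δw + β √δM) = ε`
  obtain ⟨Tw, hTw, hTw_card⟩ :=
    exists_finset_euclidean_cover (Fin d) (by positivity : 0 < ε / (4 * H)) hL₁.le
  obtain ⟨TM, hTM, hTM_card⟩ := Matrix.exists_finset_frobenius_cover (Fin d)
    (by positivity : 0 < (ε / (4 * H * β)) ^ 2) (by positivity : 0 ≤ √d / lam)
  refine ⟨sqOptimisticCover (Fin l) H β φ r Tw TM, fun V hV => ?_, ?_⟩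
  · obtain ⟨w, Λ, hw, hΛ, hVs⟩ := h𝒱 ▸ hV
    obtain rfl : V = optimisticValue H β φ r w (fun i => (Λ i)⁻¹) := funext hVs
    obtain ⟨g, hg, hgV⟩ := exists_mem_sqOptimisticCover hβ.le
      (by simpa [euclNorm_eq_norm] using hφ)
      (fun i => hTw _ (by simpa [euclNorm_eq_norm] using hw i))
      (fun i => hTM _ (by simpa using (hΛ i).1.frobenius_norm_inv_le hlam (hΛ i).2))
      (fun s => (hbd _ hV s).1)
    refine ⟨g, hg, fun s => (hgV s).trans_eq ?_⟩
    rw [Real.sqrt_sq (by positivity)]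
    field_simp
    ring
  · refine (Real.log_natCast_le_add_of_le_mul (card_sqOptimisticCover_le hTw_card hTM_card)
      (one_le_pow₀ (one_le_pow₀ ?_)) (one_le_pow₀ (one_le_pow₀ ?_))).trans_eq ?_
    · exact le_add_of_nonneg_right (by positivity)
    · exact le_add_of_nonneg_right (by positivity)
    · rw [show 1 + 2 * L₁ / (ε / (4 * H)) = 1 + 8 * H * L₁ / ε by field_simp; ring,
        show 1 + 2 * (√d / lam) / (ε / (4 * H * β)) ^ 2
          = 1 + 32 * √d * H ^ 2 * β ^ 2 / (lam * ε ^ 2) by field_simp; ring]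
      simp only [Fintype.card_fin, Real.log_pow]
      push_cast
      ring

/-- **Covering number of the squared optimistic value function class.** If every
member of the optimistic class `𝒱` takes values in `[0, H]`, then the squared class
`𝒱² = {V² : V ∈ 𝒱}` admits an `ε`-cover `C` in the sup distance with
`log |C| ≤ d l log(1 + 8H L₁/ε) + d² l log(1 + 32√d H² β²/(λ̃ ε²))`. -/
theorem stmt_12 {S A : Type*} [Fintype A] [Nonempty A]
    (d l : ℕ) (hd : 0 < d) (hl : 0 < l)
    (H β lam L₁ ε : ℝ) (hH : 1 ≤ H) (hβ : 0 < β) (hlam : 0 < lam) (hL₁ : 0 < L₁)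
    (hε : 0 < ε)
    (φ : S → A → Fin d → ℝ) (hφ : ∀ s a, euclNorm (φ s a) ≤ 1)
    (r : S → A → ℝ) (hr : ∀ s a, r s a ∈ Set.Icc (0 : ℝ) 1)
    (𝒱 : Set (S → ℝ))
    (h𝒱 : 𝒱 = {V | ∃ (w : Fin l → Fin d → ℝ) (Λ : Fin l → Matrix (Fin d) (Fin d) ℝ),
      (∀ i, euclNorm (w i) ≤ L₁) ∧
      (∀ i, (Λ i).PosDef ∧ (Λ i - lam • (1 : Matrix (Fin d) (Fin d) ℝ)).PosSemidef) ∧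
      ∀ s, V s = Finset.univ.sup' (Finset.univ_nonempty (α := A)) (fun a : A =>
        Finset.univ.inf' ⟨⟨0, hl⟩, Finset.mem_univ _⟩ (fun i : Fin l =>
          min H (r s a + w i ⬝ᵥ φ s a
            + β * Real.sqrt (φ s a ⬝ᵥ ((Λ i)⁻¹ *ᵥ φ s a)))))})
    (hbd : ∀ V ∈ 𝒱, ∀ s, V s ∈ Set.Icc (0 : ℝ) H) :
    ∃ C : Finset (S → ℝ),
      (∀ V ∈ 𝒱, ∃ g ∈ C, ∀ s, |(V s) ^ 2 - g s| ≤ ε) ∧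
      Real.log C.card ≤ d * l * Real.log (1 + 8 * H * L₁ / ε)
        + d ^ 2 * l * Real.log (1 + 32 * Real.sqrt d * H ^ 2 * β ^ 2 / (lam * ε ^ 2)) :=
  stmt_12_general d l hl H β lam L₁ ε hH hβ hlam hL₁ hε φ hφ r 𝒱 h𝒱 hbd
end

section
/- Let d, H, K be positive integers, λ̃ > 0, and let m be a non-negative integer. Suppose {Λ^{(i)}_h : 0 ≤ i ≤ m, 1 ≤ h ≤ H} are d×d positive definite matrices such that: (i) Λ^{(0)}_h = 2λ̃·I_d for every h; (ii) for every i ∈ {1,…,m}, ∏_{h=1}^H det(Λ^{(i)}_h) ≥ 2·∏_{h=1}^H det(Λ^{(i-1)}_h); and (iii) det(Λ^{(m)}_h) ≤ (λ̃ + K/d)^d for every h. Then m ≤ d·H·log₂(1 + K/(d·λ̃)). -/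
open Matrix

/-- **Switching-cost bound.** Under a determinant-doubling criterion with initial
Gram matrices `2λ̃ I` and determinant upper bound `(λ̃ + K/d)^d`, the number `m` of
updates satisfies `m ≤ d H log₂(1 + K/(d λ̃))`. -/
theorem stmt_13 (d H K : ℕ) (hd : 0 < d) (hH : 0 < H) (hK : 0 < K)
    (lam : ℝ) (hlam : 0 < lam) (m : ℕ)
    (Λ : ℕ → ℕ → Matrix (Fin d) (Fin d) ℝ)
    (hpos : ∀ i ≤ m, ∀ h ∈ Finset.Icc 1 H, (Λ i h).PosDef)
    (hinit : ∀ h ∈ Finset.Icc 1 H, Λ 0 h = (2 * lam) • (1 : Matrix (Fin d) (Fin d) ℝ))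
    (hdouble : ∀ i ∈ Finset.Icc 1 m,
      2 * ∏ h ∈ Finset.Icc 1 H, (Λ (i - 1) h).det ≤ ∏ h ∈ Finset.Icc 1 H, (Λ i h).det)
    (hdet : ∀ h ∈ Finset.Icc 1 H, (Λ m h).det ≤ (lam + K / d) ^ d) :
    (m : ℝ) ≤ d * H * Real.logb 2 (1 + K / (d * lam)) := by
  have hd' : (0:ℝ) < d := by exact_mod_cast hd
  have hK' : (0:ℝ) < K := by exact_mod_cast hK
  set P : ℕ → ℝ := fun i => ∏ h ∈ Finset.Icc 1 H, (Λ i h).det with hP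
  have hP0 : P 0 = (2 * lam) ^ (d * H) := by
    have : P 0 = ∏ h ∈ Finset.Icc 1 H, ((2*lam)^d) := by
      apply Finset.prod_congr rfl
      intro h hh
      rw [hinit h hh, Matrix.det_smul, Matrix.det_one, mul_one, Fintype.card_fin]
    rw [this, Finset.prod_const, Nat.card_Icc]
    simp [pow_mul]
  have hgrow : ∀ i ≤ m, (2:ℝ)^i * P 0 ≤ P i := by
    intro i
    induction i with
    | zero => intro _; simp
    | succ n ih =>
      intro hn
      have h1 : (2:ℝ)^n * P 0 ≤ P n := ih (by omega)
      have h2 := hdouble (n+1) (by simp; omega)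
      simp only [Nat.add_sub_cancel] at h2
      calc (2:ℝ)^(n+1) * P 0 = 2 * ((2:ℝ)^n * P 0) := by ring
        _ ≤ 2 * P n := by linarith
        _ ≤ P (n+1) := h2
  have hPm : P m ≤ ((lam + K / d) ^ d) ^ H := by
    have : P m ≤ ∏ h ∈ Finset.Icc 1 H, ((lam + K / d) ^ d) := by
      apply Finset.prod_le_prod
      · intro h hh; exact (hpos m le_rfl h hh).det_pos.le
      · intro h hh; exact hdet h hh
    rw [Finset.prod_const, Nat.card_Icc] at this
    simpa using this
  have key : (2:ℝ)^m * (2*lam)^(d*H) ≤ (lam + K/d)^(d*H) := by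
    rw [← pow_mul] at hPm
    rw [← hP0]
    exact (hgrow m le_rfl).trans hPm
  have hc : (0:ℝ) < lam + K/d := by positivity
  have h2l : (0:ℝ) < 2*lam := by linarith
  have hratio : (2:ℝ)^m ≤ ((lam + K/d)/(2*lam))^(d*H) := by
    rw [div_pow, le_div_iff₀ (by positivity)]
    exact key
  have h1x : (0:ℝ) < 1 + K / (d*lam) := by positivity
  have hrle : (lam + K/d)/(2*lam) ≤ 1 + K/(d*lam) := by
    rw [div_le_iff₀ h2l]
    have hkd : (0:ℝ) ≤ (K:ℝ)/d := by positivity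
    have h2 : (1 + K/(d*lam)) * (2*lam) = 2*lam + 2*(K/d) := by
      field_simp
    rw [h2]; linarith
  have hfinal : ((lam + K/d)/(2*lam))^(d*H) ≤ (1 + K/(d*lam))^(d*H) := by
    apply pow_le_pow_left₀ (by positivity) hrle
  have h2m : (2:ℝ)^m ≤ (1 + K/(d*lam))^(d*H) := hratio.trans hfinal
  have hlog : Real.logb 2 ((2:ℝ)^m) ≤ Real.logb 2 ((1 + K/(d*lam))^(d*H)) :=
    (Real.logb_le_logb (by norm_num : (1:ℝ) < 2) (by positivity) (by positivity)).mpr h2m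
  rw [Real.logb_pow, Real.logb_pow, Real.logb_self_eq_one (by norm_num),
    mul_one] at hlog
  calc (m:ℝ) ≤ (d*H : ℕ) * Real.logb 2 (1 + K/(d*lam)) := hlog
    _ = d * H * Real.logb 2 (1 + K/(d*lam)) := by push_cast; ring
end
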